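/- arXiv:1701.05705 — 2 statements merged into one kernel-verified Lean document; each statement's English description precedes it below -/
import Mathlib

section
/- If there exists a nontrivial (v,5,k,λ)-SEDF in an abelian group G, then for every nonprincipal character χ with χ(⋃ᵢDᵢ) ≠ 0, the rational number √(1+4λ/|χ(D)|²) equals 3 (i.e., (a,b) = (1,3) in lowest terms), and λ is even. Similarly, if there exists a nontrivial (v,6,k,λ)-SEDF, then (a,b) = (1,2) for every such χ, and 3 divides λ. -/
open Finset

/-- `{D j}` is a `(v, m, k, lam)`-strong external difference family in the
abelian group `G`: mutually disjoint `k`-subsets whose defining group-ring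
identity `D_j · (∑_{i≠j} D_i^{(-1)}) = lam (G - 1)` holds in `ℤ[G]`. -/
def IsSEDF {G : Type} [CommGroup G] [Fintype G] [DecidableEq G]
    (v m k lam : ℕ) (D : Fin m → Finset G) : Prop :=
  Fintype.card G = v ∧ 2 ≤ m ∧ (∀ i, (D i).card = k) ∧
  (∀ i j, i ≠ j → Disjoint (D i) (D j)) ∧
  ∀ j, (∑ d ∈ D j, MonoidAlgebra.of ℤ G d) *
      (∑ i ∈ Finset.univ.erase j, ∑ d ∈ D i, MonoidAlgebra.of ℤ G d⁻¹)
    = (lam : ℤ) • ((∑ g : G, MonoidAlgebra.of ℤ G g) - 1)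

section Aux
open Complex Polynomial

private lemma char_sum_zero' {G : Type} [CommGroup G] [Fintype G] (χ : G →* ℂ) (hχ : χ ≠ 1) :
    ∑ g : G, χ g = 0 := by
  obtain ⟨g₀, hg₀⟩ : ∃ g, χ g ≠ 1 := by
    by_contra hco; push_neg at hco
    exact hχ (MonoidHom.ext fun g => by simp [hco g])
  have h1 : χ g₀ * ∑ g : G, χ g = ∑ g : G, χ g := by
    rw [Finset.mul_sum]
    calc ∑ g : G, χ g₀ * χ g = ∑ g : G, χ (g₀ * g) := by simp [map_mul]
    _ = ∑ g : G, χ g :=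
      Fintype.sum_bijective (g₀ * ·) (Group.mulLeft_bijective g₀)
        (fun g => χ (g₀ * g)) χ (fun g => rfl)
  have h2 : (χ g₀ - 1) * ∑ g : G, χ g = 0 := by rw [sub_mul, one_mul, h1, sub_self]
  rcases mul_eq_zero.mp h2 with hc | hc
  · exact absurd (sub_eq_zero.mp hc) hg₀
  · exact hc

private lemma char_abs_one' {G : Type} [CommGroup G] [Fintype G] (χ : G →* ℂ) (g : G) :
    ‖χ g‖ = 1 := by
  refine Complex.norm_eq_one_of_pow_eq_one (n := Fintype.card G) ?_ Fintype.card_ne_zero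
  rw [← map_pow, pow_card_eq_one, map_one]

private lemma char_inv' {G : Type} [CommGroup G] [Fintype G] (χ : G →* ℂ) (g : G) :
    χ g⁻¹ = (starRingEnd ℂ) (χ g) := by
  rw [← Complex.inv_eq_conj (char_abs_one' χ g)]
  have h : χ g * χ g⁻¹ = 1 := by rw [← map_mul, mul_inv_cancel, map_one]
  exact (eq_inv_of_mul_eq_one_left (by rw [mul_comm] at h; exact h)).symm ▸ rfl

private lemma char_integral' {G : Type} [CommGroup G] [Fintype G] (χ : G →* ℂ) (g : G) :
    IsIntegral ℤ (χ g) := by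
  refine ⟨X ^ Fintype.card G - C 1, Polynomial.monic_X_pow_sub_C 1 Fintype.card_ne_zero, ?_⟩
  simp [eval₂_sub, eval₂_pow, ← map_pow, pow_card_eq_one]

end Aux

theorem sedf_m_five_six_scvp {G : Type} [CommGroup G] [Fintype G]
    [DecidableEq G] {v m k lam : ℕ} (D : Fin m → Finset G)
    (h : IsSEDF v m k lam D) (hk : 1 < k)
    (χ : G →* ℂ) (hχ : χ ≠ 1)
    (hχD : ∑ d ∈ Finset.univ.biUnion D, χ d ≠ 0) :
    (m = 5 →
      Real.sqrt (1 + 4 * lam /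
        ‖∑ d ∈ Finset.univ.biUnion D, χ d‖ ^ 2) = 3 ∧ 2 ∣ lam) ∧
    (m = 6 →
      Real.sqrt (1 + 4 * lam /
        ‖∑ d ∈ Finset.univ.biUnion D, χ d‖ ^ 2) = 2 ∧ 3 ∣ lam) := by
  classical
  obtain ⟨hv, hm, hcard, hdisj, heq⟩ := h
  set S : ℂ := ∑ d ∈ Finset.univ.biUnion D, χ d with hS
  set a : Fin m → ℂ := fun j => ∑ d ∈ D j, χ d with ha
  let Φ : MonoidAlgebra ℤ G →ₐ[ℤ] ℂ := MonoidAlgebra.lift ℤ ℂ G χ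
  have hΦof : ∀ g : G, Φ (MonoidAlgebra.of ℤ G g) = χ g :=
    fun g => MonoidAlgebra.lift_of (R := ℤ) χ g
  have hsum : S = ∑ j, a j :=
    Finset.sum_biUnion (fun i _ j _ hij => hdisj i j hij)
  have key : ∀ j, a j * ((starRingEnd ℂ) S - (starRingEnd ℂ) (a j)) = -(lam:ℂ) := by
    intro j
    have h1 := congrArg Φ (heq j)
    rw [map_mul, map_sum, map_zsmul, map_sub, map_sum, map_one] at h1
    simp only [hΦof, map_sum] at h1
    rw [char_sum_zero' χ hχ] at h1
    have h2 : ∀ i, (∑ d ∈ D i, χ d⁻¹) = (starRingEnd ℂ) (a i) := by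
      intro i; rw [map_sum]; exact Finset.sum_congr rfl fun d _ => char_inv' χ d
    simp only [h2] at h1
    have h3 : ∑ i ∈ Finset.univ.erase j, (starRingEnd ℂ) (a i)
        = (starRingEnd ℂ) S - (starRingEnd ℂ) (a j) := by
      rw [hsum, map_sum, ← Finset.add_sum_erase _ _ (Finset.mem_univ j)]; ring
    rw [h3] at h1
    have h4 : (lam:ℤ) • ((0:ℂ) - 1) = -(lam:ℂ) := by simp
    rw [h4] at h1
    exact h1
  have hlam : 0 < lam := by
    rcases Nat.eq_zero_or_pos lam with h0 | h0
    · exfalso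
      subst h0
      let Ψ : MonoidAlgebra ℤ G →ₐ[ℤ] ℂ := MonoidAlgebra.lift ℤ ℂ G 1
      have hΨof : ∀ g : G, Ψ (MonoidAlgebra.of ℤ G g) = 1 :=
        fun g => MonoidAlgebra.lift_of (R := ℤ) 1 g
      have j₀ : Fin m := ⟨0, by omega⟩
      have h1 := congrArg Ψ (heq j₀)
      rw [map_mul, map_sum, map_zsmul] at h1
      simp only [hΨof, map_sum] at h1
      simp only [Finset.sum_const, hcard, nsmul_eq_mul, mul_one] at h1
      rw [Finset.card_erase_of_mem (Finset.mem_univ j₀), Finset.card_univ,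
        Fintype.card_fin] at h1
      simp only [Nat.cast_zero, zero_smul] at h1
      have hk0 : ((k:ℂ)) ≠ 0 := Nat.cast_ne_zero.mpr (by omega)
      have hm1 : (((m-1) : ℕ):ℂ) ≠ 0 := Nat.cast_ne_zero.mpr (by omega)
      exact (mul_ne_zero hk0 (mul_ne_zero hm1 hk0)) h1
    · exact h0
  set ns : ℝ := Complex.normSq S with hns
  have hns0 : 0 < ns := Complex.normSq_pos.mpr hχD
  set t : Fin m → ℝ := fun j => (Complex.normSq (a j) - lam) / ns with ht
  have haj : ∀ j, a j = (t j : ℂ) * S := by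
    intro j
    have h1 : a j * (starRingEnd ℂ) S = ((Complex.normSq (a j) - lam : ℝ) : ℂ) := by
      have := key j
      rw [mul_sub, Complex.mul_conj] at this
      push_cast
      linear_combination this
    have h2 : a j * ((starRingEnd ℂ) S * S) = ((Complex.normSq (a j) - lam : ℝ) : ℂ) * S := by
      rw [← mul_assoc, h1]
    rw [mul_comm ((starRingEnd ℂ) S) S, Complex.mul_conj] at h2
    rw [ht]
    push_cast
    rw [div_mul_eq_mul_div, eq_div_iff (by exact_mod_cast hns0.ne')]
    push_cast at h2 ⊢
    linear_combination h2
  have hquad : ∀ j, t j ^ 2 - t j = lam / ns := by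
    intro j
    have h1 : Complex.normSq (a j) = t j ^ 2 * ns := by
      rw [haj j, Complex.normSq_mul, Complex.normSq_ofReal]; ring
    have h2 : t j * ns = Complex.normSq (a j) - lam := by
      rw [ht]; field_simp
    rw [h1] at h2
    rw [eq_div_iff hns0.ne']
    linear_combination -h2
  have hsumt : ∑ j, t j = 1 := by
    have h1 : ((∑ j, t j : ℝ) : ℂ) * S = S := by
      calc ((∑ j, t j : ℝ) : ℂ) * S = ∑ j, (t j : ℂ) * S := by
            push_cast; rw [Finset.sum_mul]
      _ = ∑ j, a j := Finset.sum_congr rfl fun j _ => (haj j).symm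
      _ = S := hsum.symm
    have h2 : (((∑ j, t j : ℝ) : ℂ) - 1) * S = 0 := by
      rw [sub_mul, one_mul, h1, sub_self]
    rcases mul_eq_zero.mp h2 with hc | hc
    · have h3 : ((∑ j, t j : ℝ) : ℂ) = 1 := by linear_combination hc
      exact_mod_cast h3
    · exact absurd hc hχD
  -- the square root
  set β : ℝ := Real.sqrt (1 + 4 * lam / ns) with hβ
  have harg : (0:ℝ) ≤ 1 + 4 * lam / ns := by positivity
  have hβsq : β ^ 2 = 1 + 4 * lam / ns := Real.sq_sqrt harg
  have hc0 : 0 < (lam:ℝ) / ns := div_pos (by exact_mod_cast hlam) hns0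
  have hβ1 : 1 < β := by
    rw [hβ]
    rw [Real.lt_sqrt (by norm_num : (0:ℝ) ≤ 1)]
    have hl0 : (0:ℝ) < lam := by exact_mod_cast hlam
    have h0 : 0 < 4 * (lam:ℝ) / ns := div_pos (by linarith) hns0
    nlinarith [h0]
  have hdich : ∀ j, 2 * t j - 1 = β ∨ 2 * t j - 1 = -β := by
    intro j
    have h1 : (2 * t j - 1 - β) * (2 * t j - 1 + β) = 0 := by
      linear_combination 4 * hquad j - hβsq
    rcases mul_eq_zero.mp h1 with hc | hc
    · left; linarith
    · right; linarith
  set p : ℕ := (Finset.univ.filter (fun j => 2 * t j - 1 = β)).card with hp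
  have hpm : p ≤ m := by
    calc p ≤ Finset.univ.card := Finset.card_filter_le _ _
    _ = m := by simp
  have hkey : ((m:ℝ) - 2 * p) * β = (m:ℝ) - 2 := by
    have h1 : ∑ j, (2 * t j - 1) = 2 - (m:ℝ) := by
      rw [Finset.sum_sub_distrib, ← Finset.mul_sum, hsumt]
      simp
    have hcardnot : (Finset.univ.filter (fun j => ¬(2 * t j - 1 = β))).card = m - p := by
      have h3 := Finset.card_filter_add_card_filter_not
        (s := (Finset.univ : Finset (Fin m))) (p := fun j => 2 * t j - 1 = β)
      rw [Finset.card_univ, Fintype.card_fin] at h3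
      omega
    have h2 : ∑ j, (2 * t j - 1) = (p:ℝ) * β + ((m - p : ℕ):ℝ) * (-β) := by
      rw [← Finset.sum_filter_add_sum_filter_not Finset.univ (fun j => 2 * t j - 1 = β)]
      congr 1
      · rw [Finset.sum_congr rfl (fun j hj => (Finset.mem_filter.mp hj).2),
          Finset.sum_const, nsmul_eq_mul]
      · have h4 : ∀ j ∈ Finset.univ.filter (fun j => ¬(2 * t j - 1 = β)),
            2 * t j - 1 = -β := by
          intro j hj
          rcases hdich j with hc | hc
          · exact absurd hc (Finset.mem_filter.mp hj).2
          · exact hc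
        rw [Finset.sum_congr rfl h4, Finset.sum_const, nsmul_eq_mul, hcardnot]
    rw [h1] at h2
    rw [Nat.cast_sub hpm] at h2
    linear_combination h2
  -- integrality
  have hSint : IsIntegral ℤ S := by
    have h1 : S ∈ integralClosure ℤ ℂ :=
      Subalgebra.sum_mem _ (fun d _ => char_integral' χ d)
    exact h1
  have hconjint : IsIntegral ℤ ((starRingEnd ℂ) S) :=
    IsIntegral.map ((starRingEnd ℂ).toIntAlgHom) hSint
  have hmulint : IsIntegral ℤ (S * (starRingEnd ℂ) S) := hSint.mul hconjint
  have hSns : S * (starRingEnd ℂ) S = ((ns:ℝ):ℂ) := by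
    rw [Complex.mul_conj]
  constructor
  · -- m = 5
    intro hm5
    subst hm5
    have hβ3 : β = 3 := by
      obtain ⟨q, hq⟩ : ∃ q : ℤ, (5:ℤ) - 2*(p:ℤ) = 2*q + 1 := ⟨2 - p, by ring⟩
      have hkey5 : ((5:ℝ) - 2 * p) * β = 3 := by
        have : ((5:ℕ):ℝ) = 5 := by norm_num
        rw [this] at hkey
        linarith [hkey]
      have hpos : (0:ℤ) < 5 - 2*(p:ℤ) := by
        by_contra hcon
        push_neg at hcon
        have hcr : ((5:ℝ) - 2*(p:ℝ)) ≤ 0 := by exact_mod_cast hcon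
        nlinarith
      have hlt : (5:ℤ) - 2*(p:ℤ) < 3 := by
        by_contra hcon
        push_neg at hcon
        have hcr : (3:ℝ) ≤ (5:ℝ) - 2*(p:ℝ) := by exact_mod_cast hcon
        nlinarith
      have hn1 : (5:ℤ) - 2*(p:ℤ) = 1 := by omega
      have hnr : (5:ℝ) - 2*(p:ℝ) = 1 := by exact_mod_cast hn1
      rw [hnr, one_mul] at hkey5
      exact hkey5
    have hns2 : (ns:ℝ) = lam / 2 := by
      have h9 : (9:ℝ) * ns = (1 + 4 * lam / ns) * ns := by rw [← hβsq, hβ3]; norm_num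
      rw [add_mul, div_mul_cancel₀ _ hns0.ne'] at h9
      linarith
    constructor
    · rw [Complex.sq_norm, ← hns]
      exact hβ3
    · -- 2 ∣ lam
      have h10 : IsIntegral ℤ (algebraMap ℚ ℂ ((lam:ℚ)/2)) := by
        have he : algebraMap ℚ ℂ ((lam:ℚ)/2) = S * (starRingEnd ℂ) S := by
          rw [hSns, hns2, eq_ratCast]
          push_cast
          ring
        rw [he]; exact hmulint
      have h11 : IsIntegral ℤ ((lam:ℚ)/2) :=
        (isIntegral_algebraMap_iff (algebraMap ℚ ℂ).injective).mp h10
      obtain ⟨z, hz⟩ := IsIntegrallyClosed.isIntegral_iff.mp h11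
      rw [eq_intCast] at hz
      have hz2 : (lam:ℤ) = 2 * z := by
        have h12 : (lam:ℚ) = 2 * (z:ℚ) := by rw [hz]; ring
        exact_mod_cast h12
      have : (2:ℤ) ∣ (lam:ℤ) := ⟨z, hz2⟩
      exact_mod_cast this
  · -- m = 6
    intro hm6
    subst hm6
    have hβ2 : β = 2 := by
      obtain ⟨q, hq⟩ : ∃ q : ℤ, (6:ℤ) - 2*(p:ℤ) = 2*q := ⟨3 - p, by ring⟩
      have hkey6 : ((6:ℝ) - 2 * p) * β = 4 := by
        have : ((6:ℕ):ℝ) = 6 := by norm_num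
        rw [this] at hkey
        linarith [hkey]
      have hpos : (0:ℤ) < 6 - 2*(p:ℤ) := by
        by_contra hcon
        push_neg at hcon
        have hcr : ((6:ℝ) - 2*(p:ℝ)) ≤ 0 := by exact_mod_cast hcon
        nlinarith
      have hlt : (6:ℤ) - 2*(p:ℤ) < 4 := by
        by_contra hcon
        push_neg at hcon
        have hcr : (4:ℝ) ≤ (6:ℝ) - 2*(p:ℝ) := by exact_mod_cast hcon
        nlinarith
      have hn1 : (6:ℤ) - 2*(p:ℤ) = 2 := by omega
      have hnr : (6:ℝ) - 2*(p:ℝ) = 2 := by exact_mod_cast hn1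
      rw [hnr] at hkey6
      linarith
    have hns2 : (3:ℝ) * ns = 4 * lam := by
      have h9 : (4:ℝ) * ns = (1 + 4 * lam / ns) * ns := by rw [← hβsq, hβ2]; norm_num
      rw [add_mul, div_mul_cancel₀ _ hns0.ne'] at h9
      linarith
    constructor
    · rw [Complex.sq_norm, ← hns]
      exact hβ2
    · -- 3 ∣ lam
      have h10 : IsIntegral ℤ (algebraMap ℚ ℂ ((4*lam:ℚ)/3)) := by
        have he : algebraMap ℚ ℂ ((4*lam:ℚ)/3) = S * (starRingEnd ℂ) S := by
          rw [hSns, eq_ratCast]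
          have : (ns:ℝ) = 4 * lam / 3 := by linarith
          rw [this]
          push_cast
          ring
        rw [he]; exact hmulint
      have h11 : IsIntegral ℤ ((4*lam:ℚ)/3) :=
        (isIntegral_algebraMap_iff (algebraMap ℚ ℂ).injective).mp h10
      obtain ⟨z, hz⟩ := IsIntegrallyClosed.isIntegral_iff.mp h11
      rw [eq_intCast] at hz
      have hz2 : 4 * (lam:ℤ) = 3 * z := by
        have h12 : 4 * (lam:ℚ) = 3 * (z:ℚ) := by
          rw [hz]; ring
        exact_mod_cast h12
      have h13 : (3:ℤ) ∣ 4 * (lam:ℤ) := ⟨z, hz2⟩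
      have h14 : (3:ℕ) ∣ 4 * lam := by exact_mod_cast h13
      exact (Nat.Coprime.dvd_of_dvd_mul_left (by decide) h14)
end

section
/- Suppose {D₁,…,Dₘ} is a nontrivial (v,m,k,λ)-SEDF in an abelian group G with m > 2, having the simple character value property with respect to (a,b). Then the number of nonprincipal characters χ with χ(D) = 0 equals (v−1)·(1 − (b²−a²)(v−km)m / (4a²k(m−1))), the number with χ(D₁) = ((a+b)/(2a))χ(D) ≠ 0 equals (v−1)(v−km)(b²−a²)((b−a)m+2a)/(8a²bk(m−1)), and the number with χ(D₁) = ((a−b)/(2a))χ(D) ≠ 0 equals (v−1)(v−km)(b²−a²)((b+a)m−2a)/(8a²bk(m−1)); all three quantities are non-negative integers. -/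
open Finset

/-- The simple character value property with respect to `(a, b)`. -/
def SCVP {G : Type} [CommGroup G] [Fintype G] [DecidableEq G]
    (lam : ℕ) (DU : Finset G) (a b : ℕ) : Prop :=
  ∀ χ : G →* ℂ, χ ≠ 1 → (∑ d ∈ DU, χ d) ≠ 0 →
    Real.sqrt (1 + 4 * lam / ‖∑ d ∈ DU, χ d‖ ^ 2) = (b : ℝ) / a

/-!
Applying a character χ to the group-ring identity of the SEDF gives
`χ(D₁) (conj χ(D) - conj χ(D₁)) = -λ` for χ ≠ 1. Combined with `|χ(D)|² = 4a²λ/(b² - a²)`,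
this says that `χ(D₁)/χ(D)` is real and a root of `4a²u² - 4a²u - (b² - a²)`, so it equals
`(a ± b)/(2a)`. Orthogonality of characters evaluates `∑_{χ ≠ 1} χ(D) conj χ(D) = v|D| - |D|²`
and `∑_{χ ≠ 1} χ(D₁) conj χ(D) = v|D₁| - |D₁||D|`. Every character with `χ(D) ≠ 0` contributes
the same `|χ(D)|²`, so both sums are linear in the numbers of characters of each kind, and
together with `λ(v - 1) = k²(m - 1)` (the principal character) these linear relations
determine the counts.
-/

open ComplexConjugate

section Characters

variable {G : Type*} [CommGroup G]

def MonoidHom.equivAddChar (G : Type*) [CommGroup G] : (G →* ℂ) ≃ AddChar (Additive G) ℂ :=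
  (AddChar.toMonoidHomEquiv (A := Additive G)).symm

instance MonoidHom.finite_complex [Finite G] : Finite (G →* ℂ) :=
  .of_equiv _ (MonoidHom.equivAddChar G).symm

theorem card_monoidHom_complex [Finite G] : Nat.card (G →* ℂ) = Nat.card G := by
  have := Fintype.ofFinite G
  rw [Nat.card_congr (MonoidHom.equivAddChar G), Nat.card_eq_fintype_card, AddChar.card_eq,
    ← Nat.card_eq_fintype_card, Nat.card_congr Additive.toMul]

theorem MonoidHom.map_inv_eq_conj [Finite G] (χ : G →* ℂ) (g : G) : χ g⁻¹ = conj (χ g) := by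
  have := Fintype.ofFinite G
  rw [map_inv, Complex.inv_eq_conj (Complex.norm_eq_one_of_pow_eq_one
    (by rw [← map_pow, pow_card_eq_one, map_one]) Fintype.card_ne_zero)]

variable [Fintype G] [DecidableEq G] [Fintype (G →* ℂ)]

theorem sum_monoidHom_apply_eq_ite (g : G) :
    ∑ χ : G →* ℂ, χ g = if g = 1 then (Fintype.card G : ℂ) else 0 := by
  rw [← Fintype.sum_equiv (MonoidHom.equivAddChar G).symm (fun ψ => ψ (Additive.ofMul g)) _
    (fun _ => rfl)]
  simpa using AddChar.sum_apply_eq_ite (Additive.ofMul g)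

theorem sum_charSum_mul_conj (A B : Finset G) :
    ∑ χ : G →* ℂ, (∑ a ∈ A, χ a) * conj (∑ b ∈ B, χ b) = Fintype.card G * #(A ∩ B) := by
  calc _ = ∑ a ∈ A, ∑ b ∈ B, ∑ χ : G →* ℂ, χ (a / b) := by
        simp_rw [map_sum, ← MonoidHom.map_inv_eq_conj, sum_mul_sum, ← map_mul, ← div_eq_mul_inv]
        rw [sum_comm]
        exact sum_congr rfl fun _ _ => sum_comm
    _ = _ := by
        simp_rw [sum_monoidHom_apply_eq_ite, div_eq_one, sum_ite_eq, ← sum_filter,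
          filter_mem_eq_inter, sum_const, nsmul_eq_mul, mul_comm]

end Characters

namespace IsSEDF

variable {G : Type} [CommGroup G] [Fintype G] [DecidableEq G] {v m k lam : ℕ}
  {D : Fin m → Finset G}

theorem card_biUnion (h : IsSEDF v m k lam D) : #(univ.biUnion D) = m * k := by
  rw [Finset.card_biUnion fun i _ j _ hij => h.2.2.2.1 i j hij]
  simp [h.2.2.1]

theorem charSum_mul_conj_sub (h : IsSEDF v m k lam D) (χ : G →* ℂ) (j : Fin m) :
    (∑ d ∈ D j, χ d) * (conj (∑ d ∈ univ.biUnion D, χ d) - conj (∑ d ∈ D j, χ d))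
      = lam * ((∑ g, χ g) - 1) := by
  have hχ := congrArg (MonoidAlgebra.lift ℤ ℂ G χ) (h.2.2.2.2 j)
  simp only [map_mul, map_sum, map_zsmul, map_sub, map_one, MonoidAlgebra.lift_of,
    MonoidHom.map_inv_eq_conj] at hχ
  rw [sum_biUnion fun i _ j _ hij => h.2.2.2.1 i j hij, ← sum_erase_add _ _ (mem_univ j),
    map_add, add_sub_cancel_right]
  simpa only [map_sum, zsmul_eq_mul, Int.cast_natCast] using hχ

theorem lam_mul_card_sub_one (h : IsSEDF v m k lam D) :
    (lam : ℂ) * (v - 1) = k ^ 2 * (m - 1) := by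
  have hprincipal := h.charSum_mul_conj_sub 1 ⟨0, by have := h.2.1; omega⟩
  simp only [MonoidHom.one_apply, sum_const, h.card_biUnion, h.2.2.1, card_univ, h.1,
    nsmul_eq_mul, mul_one, Nat.cast_mul, map_mul, map_natCast] at hprincipal
  linear_combination -hprincipal

end IsSEDF

theorem SCVP.charSum_mul_conj {G : Type} [CommGroup G] [Fintype G] [DecidableEq G]
    {lam a b : ℕ} {DU : Finset G} (h : SCVP lam DU a b) (ha : a ≠ 0) {χ : G →* ℂ} (hχ : χ ≠ 1)
    (hS : ∑ d ∈ DU, χ d ≠ 0) :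
    (∑ d ∈ DU, χ d) * conj (∑ d ∈ DU, χ d) * (b ^ 2 - a ^ 2) = 4 * a ^ 2 * lam := by
  have hsq := Real.sq_sqrt (by positivity : 0 ≤ 1 + 4 * (lam : ℝ) / ‖∑ d ∈ DU, χ d‖ ^ 2)
  rw [h χ hχ hS] at hsq
  have ha' : (a : ℝ) ≠ 0 := by exact_mod_cast ha
  have hnorm : ‖∑ d ∈ DU, χ d‖ ^ 2 * ((b : ℝ) ^ 2 - a ^ 2) = 4 * a ^ 2 * lam := by
    field_simp at hsq
    linear_combination hsq
  rw [Complex.mul_conj, ← Complex.sq_norm]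
  exact_mod_cast hnorm

theorem eq_mul_or_eq_mul_of_mul_conj_sub {S S₀ : ℂ} {lam a b : ℝ} (ha : a ≠ 0) (hS : S ≠ 0)
    (hS₀ : S₀ * (conj S - conj S₀) = -lam)
    (hSS : S * conj S * (b ^ 2 - a ^ 2) = 4 * a ^ 2 * lam) :
    S₀ = (a + b) / (2 * a) * S ∨ S₀ = (a - b) / (2 * a) * S := by
  obtain ⟨u, rfl⟩ : ∃ u, S₀ = u * S := ⟨S₀ / S, (div_mul_cancel₀ _ hS).symm⟩
  have hc : S * conj S ≠ 0 := mul_ne_zero hS ((map_ne_zero _).2 hS)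
  have ha' : (a : ℂ) ≠ 0 := by exact_mod_cast ha
  rw [map_mul] at hS₀
  have hu : conj u = u := by
    have h' := congrArg conj hS₀
    simp only [map_mul, map_sub, map_neg, Complex.conj_conj, Complex.conj_ofReal] at h'
    refine mul_right_cancel₀ hc ?_
    linear_combination h' - hS₀
  have hquad : (2 * a * u - (a + b)) * (2 * a * u - (a - b)) * (S * conj S) = 0 := by
    rw [hu] at hS₀
    linear_combination -(4 * a ^ 2 * hS₀ + hSS)
  rcases mul_eq_zero.1 ((mul_eq_zero.1 hquad).resolve_right hc) with h | h
  · left; congr 1; field_simp; linear_combination h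
  · right; congr 1; field_simp; linear_combination h

theorem IsSEDF.charSum_eq_mul_or_eq_mul {G : Type} [CommGroup G] [Fintype G] [DecidableEq G]
    {v m k lam a b : ℕ} {D : Fin m → Finset G} (h : IsSEDF v m k lam D)
    (hscvp : SCVP lam (univ.biUnion D) a b) (ha : a ≠ 0) (j : Fin m) {χ : G →* ℂ}
    (hχ : χ ≠ 1) (hS : ∑ d ∈ univ.biUnion D, χ d ≠ 0) :
    ∑ d ∈ D j, χ d = (a + b) / (2 * a) * ∑ d ∈ univ.biUnion D, χ d ∨
      ∑ d ∈ D j, χ d = (a - b) / (2 * a) * ∑ d ∈ univ.biUnion D, χ d := by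
  have hS₀ := h.charSum_mul_conj_sub χ j
  rw [sum_hom_units_eq_zero χ hχ, zero_sub, mul_neg_one] at hS₀
  simpa only [Complex.ofReal_natCast] using eq_mul_or_eq_mul_of_mul_conj_sub (lam := lam)
    (a := a) (b := b) (by exact_mod_cast ha) hS (by simpa only [Complex.ofReal_natCast] using hS₀)
    (by simpa only [Complex.ofReal_natCast] using hscvp.charSum_mul_conj ha hχ hS)

section Counting

variable {G : Type*} [CommGroup G] [Fintype G] [Fintype (G →* ℂ)]

noncomputable def nonvanishingChars (B : Finset G) : Finset (G →* ℂ) :=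
  (univ.erase 1).filter fun χ => ∑ b ∈ B, χ b ≠ 0

noncomputable def ratioChars (A B : Finset G) (α : ℂ) : Finset (G →* ℂ) :=
  (nonvanishingChars B).filter fun χ => ∑ a ∈ A, χ a = α * ∑ b ∈ B, χ b

@[simp]
theorem mem_nonvanishingChars {B : Finset G} {χ : G →* ℂ} :
    χ ∈ nonvanishingChars B ↔ χ ≠ 1 ∧ ∑ b ∈ B, χ b ≠ 0 := by
  simp [nonvanishingChars]

theorem natCard_eq_card_ratioChars (A B : Finset G) (α : ℂ) :
    Nat.card {χ : G →* ℂ // χ ≠ 1 ∧ ∑ b ∈ B, χ b ≠ 0 ∧ ∑ a ∈ A, χ a = α * ∑ b ∈ B, χ b}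
      = #(ratioChars A B α) :=
  Nat.subtype_card _ fun χ => by simp [ratioChars, and_assoc]

theorem ratioChars_eq_filter_not {A B : Finset G} {α β : ℂ} (hαβ : α ≠ β)
    (hAB : ∀ χ ∈ nonvanishingChars B,
      ∑ a ∈ A, χ a = α * ∑ b ∈ B, χ b ∨ ∑ a ∈ A, χ a = β * ∑ b ∈ B, χ b) :
    ratioChars A B β
      = (nonvanishingChars B).filter fun χ => ¬ ∑ a ∈ A, χ a = α * ∑ b ∈ B, χ b := by
  refine filter_congr fun χ hχ => ⟨fun hβ hα => ?_, (hAB χ hχ).resolve_left⟩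
  exact hαβ (mul_right_cancel₀ (mem_nonvanishingChars.1 hχ).2 (hα.symm.trans hβ))

theorem card_ratioChars_add_card_ratioChars {A B : Finset G} {α β : ℂ} (hαβ : α ≠ β)
    (hAB : ∀ χ ∈ nonvanishingChars B,
      ∑ a ∈ A, χ a = α * ∑ b ∈ B, χ b ∨ ∑ a ∈ A, χ a = β * ∑ b ∈ B, χ b) :
    #(ratioChars A B α) + #(ratioChars A B β) = #(nonvanishingChars B) := by
  rw [ratioChars_eq_filter_not hαβ hAB, ratioChars, card_filter_add_card_filter_not]

theorem card_vanishing_add_card_nonvanishingChars_add_one (B : Finset G) :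
    Nat.card {χ : G →* ℂ // χ ≠ 1 ∧ ∑ b ∈ B, χ b = 0} + #(nonvanishingChars B) + 1
      = Fintype.card G := by
  rw [Nat.subtype_card ((univ.erase 1).filter fun χ => ¬ ∑ b ∈ B, χ b ≠ 0) (by simp), add_comm _ #_,
    nonvanishingChars, card_filter_add_card_filter_not, card_erase_add_one (mem_univ 1),
    card_univ, ← Nat.card_eq_fintype_card, card_monoidHom_complex, Nat.card_eq_fintype_card]

variable [DecidableEq G]

theorem sum_nonvanishingChars_charSum_mul_conj (A B : Finset G) :
    ∑ χ ∈ nonvanishingChars B, (∑ a ∈ A, χ a) * conj (∑ b ∈ B, χ b)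
      = Fintype.card G * #(A ∩ B) - #A * #B := by
  rw [nonvanishingChars, sum_filter_of_ne fun χ _ hχ hB => by simp [hB] at hχ,
    sum_erase_eq_sub (mem_univ 1), sum_charSum_mul_conj]
  simp

theorem card_nonvanishingChars_mul {B : Finset G} {c : ℂ}
    (hc : ∀ χ ∈ nonvanishingChars B, (∑ b ∈ B, χ b) * conj (∑ b ∈ B, χ b) = c) :
    #(nonvanishingChars B) * c = Fintype.card G * #B - #B ^ 2 := by
  have h := sum_nonvanishingChars_charSum_mul_conj B B
  rw [inter_self, sum_congr rfl hc] at h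
  simpa [sq] using h

theorem card_ratioChars_mul {A B : Finset G} (hAB : A ⊆ B) {α β c : ℂ} (hαβ : α ≠ β)
    (hratio : ∀ χ ∈ nonvanishingChars B,
      ∑ a ∈ A, χ a = α * ∑ b ∈ B, χ b ∨ ∑ a ∈ A, χ a = β * ∑ b ∈ B, χ b)
    (hc : ∀ χ ∈ nonvanishingChars B, (∑ b ∈ B, χ b) * conj (∑ b ∈ B, χ b) = c) :
    (α * #(ratioChars A B α) + β * #(ratioChars A B β)) * c
      = Fintype.card G * #A - #A * #B := by
  have hsum : ∀ γ, ∑ χ ∈ ratioChars A B γ, (∑ a ∈ A, χ a) * conj (∑ b ∈ B, χ b)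
      = γ * #(ratioChars A B γ) * c := fun γ => by
    rw [sum_congr rfl (g := fun _ => γ * c) fun χ hχ => ?_, sum_const, nsmul_eq_mul]
    · ring
    · obtain ⟨hχ, hA⟩ := mem_filter.1 hχ
      rw [hA, mul_assoc, hc χ hχ]
  have h := sum_nonvanishingChars_charSum_mul_conj A B
  rwa [inter_eq_left.2 hAB,
    ← sum_filter_add_sum_filter_not _ fun χ => ∑ a ∈ A, χ a = α * ∑ b ∈ B, χ b,
    ← ratioChars, ← ratioChars_eq_filter_not hαβ hratio, hsum, hsum, ← add_mul] at h

end Counting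

theorem counts_of_linear_relations {K : Type*} [Field K] [CharZero K] {v m k lam a b z n p q : K}
    (ha : a ≠ 0) (hb : b ≠ 0) (hk : k ≠ 0) (hm : m - 1 ≠ 0) (hba : b ^ 2 - a ^ 2 ≠ 0)
    (hlam : lam * (v - 1) = k ^ 2 * (m - 1)) (hzn : z + n = v - 1) (hpq : p + q = n)
    (hnc : n * (4 * a ^ 2 * lam / (b ^ 2 - a ^ 2)) = v * (m * k) - (m * k) ^ 2)
    (hweightedc : ((a + b) / (2 * a) * p + (a - b) / (2 * a) * q) * (4 * a ^ 2 * lam / (b ^ 2 - a ^ 2))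
      = v * k - k * (m * k)) :
    z = (v - 1) * (1 - (b ^ 2 - a ^ 2) * (v - k * m) * m / (4 * a ^ 2 * k * (m - 1))) ∧
    p = (v - 1) * (v - k * m) * (b ^ 2 - a ^ 2) * ((b - a) * m + 2 * a)
      / (8 * a ^ 2 * b * k * (m - 1)) ∧
    q = (v - 1) * (v - k * m) * (b ^ 2 - a ^ 2) * ((b + a) * m - 2 * a)
      / (8 * a ^ 2 * b * k * (m - 1)) := by
  have hn : n * (4 * a ^ 2 * lam) = m * k * (v - m * k) * (b ^ 2 - a ^ 2) := by
    field_simp at hnc; linear_combination hnc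
  have hweighted : ((a + b) * p + (a - b) * q) * (4 * a ^ 2 * lam)
      = 2 * a * k * (v - m * k) * (b ^ 2 - a ^ 2) := by
    field_simp at hweightedc; linear_combination a * hweightedc
  refine ⟨?_, ?_, ?_⟩
  · have hz : k * (z * (4 * a ^ 2 * k * (m - 1)))
        = k * ((v - 1) * (4 * a ^ 2 * k * (m - 1) - (b ^ 2 - a ^ 2) * (v - k * m) * m)) := by
      linear_combination 4 * a ^ 2 * k ^ 2 * (m - 1) * hzn + 4 * a ^ 2 * n * hlam - (v - 1) * hn
    field_simp
    linear_combination mul_left_cancel₀ hk hz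
  · have hp : k * (p * (8 * a ^ 2 * b * k * (m - 1)))
        = k * ((v - 1) * (v - k * m) * (b ^ 2 - a ^ 2) * ((b - a) * m + 2 * a)) := by
      linear_combination -8 * a ^ 2 * b * p * hlam
        + (v - 1) * (hweighted + (b - a) * 4 * a ^ 2 * lam * hpq + (b - a) * hn)
    field_simp
    linear_combination mul_left_cancel₀ hk hp
  · have hq : k * (q * (8 * a ^ 2 * b * k * (m - 1)))
        = k * ((v - 1) * (v - k * m) * (b ^ 2 - a ^ 2) * ((b + a) * m - 2 * a)) := by
      linear_combination -8 * a ^ 2 * b * q * hlam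
        + (v - 1) * ((a + b) * 4 * a ^ 2 * lam * hpq + (a + b) * hn - hweighted)
    field_simp
    linear_combination mul_left_cancel₀ hk hq

theorem sedf_scvp_character_counts {G : Type} [CommGroup G] [Fintype G]
    [DecidableEq G] {v m k lam : ℕ} (D : Fin m → Finset G)
    (h : IsSEDF v m k lam D) (hk : 1 < k) (hm : 2 < m)
    (a b : ℕ) (ha : 0 < a) (hab : a < b)
    (hscvp : SCVP lam (Finset.univ.biUnion D) a b) :
    (Nat.card {χ : G →* ℂ // χ ≠ 1 ∧ ∑ d ∈ Finset.univ.biUnion D, χ d = 0} : ℚ)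
      = ((v : ℚ) - 1) *
          (1 - ((b : ℚ) ^ 2 - a ^ 2) * ((v : ℚ) - k * m) * m / (4 * a ^ 2 * k * (m - 1))) ∧
    (Nat.card {χ : G →* ℂ // χ ≠ 1 ∧ (∑ d ∈ Finset.univ.biUnion D, χ d) ≠ 0 ∧
        ∑ d ∈ D ⟨0, by omega⟩, χ d
          = (((a : ℂ) + b) / (2 * a)) * ∑ d ∈ Finset.univ.biUnion D, χ d} : ℚ)
      = ((v : ℚ) - 1) * ((v : ℚ) - k * m) * ((b : ℚ) ^ 2 - a ^ 2) *
          (((b : ℚ) - a) * m + 2 * a) / (8 * a ^ 2 * b * k * (m - 1)) ∧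
    (Nat.card {χ : G →* ℂ // χ ≠ 1 ∧ (∑ d ∈ Finset.univ.biUnion D, χ d) ≠ 0 ∧
        ∑ d ∈ D ⟨0, by omega⟩, χ d
          = (((a : ℂ) - b) / (2 * a)) * ∑ d ∈ Finset.univ.biUnion D, χ d} : ℚ)
      = ((v : ℚ) - 1) * ((v : ℚ) - k * m) * ((b : ℚ) ^ 2 - a ^ 2) *
          (((b : ℚ) + a) * m - 2 * a) / (8 * a ^ 2 * b * k * (m - 1)) := by
  let := Fintype.ofFinite (G →* ℂ)
  have ha' : (a : ℂ) ≠ 0 := by exact_mod_cast ha.ne'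
  have hb : (b : ℂ) ≠ 0 := by exact_mod_cast (ha.trans hab).ne'
  have hba : (b : ℂ) ^ 2 - a ^ 2 ≠ 0 := by
    rw [sub_ne_zero]; exact_mod_cast (Nat.pow_lt_pow_left hab two_ne_zero).ne'
  have hαβ : ((a : ℂ) + b) / (2 * a) ≠ (a - b) / (2 * a) := by
    rw [Ne, div_left_inj' (by simp [ha']), sub_eq_add_neg, add_right_inj, self_eq_neg]
    exact hb
  have hc := fun χ hχ => eq_div_of_mul_eq hba
    ((mem_nonvanishingChars.1 hχ).elim (hscvp.charSum_mul_conj (χ := χ) ha.ne'))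
  have hratio := fun χ hχ => (mem_nonvanishingChars.1 hχ).elim
    (h.charSum_eq_mul_or_eq_mul (χ := χ) hscvp ha.ne' ⟨0, by omega⟩)
  have hzn := congrArg (Nat.cast (R := ℂ))
    (card_vanishing_add_card_nonvanishingChars_add_one (univ.biUnion D))
  have hpq := congrArg (Nat.cast (R := ℂ)) (card_ratioChars_add_card_ratioChars hαβ hratio)
  have hn := card_nonvanishingChars_mul hc
  have hpq' := card_ratioChars_mul (subset_biUnion_of_mem D (mem_univ _)) hαβ hratio hc
  simp only [h.1, h.card_biUnion, h.2.2.1] at hzn hn hpq'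
  push_cast at hzn hpq hn hpq'
  obtain ⟨hZ, hP, hM⟩ := counts_of_linear_relations ha' hb (by exact_mod_cast (by omega : k ≠ 0))
    (by rw [sub_ne_zero]; exact_mod_cast (by omega : m ≠ 1)) hba h.lam_mul_card_sub_one
    (eq_sub_of_add_eq hzn) hpq hn hpq'
  rw [natCard_eq_card_ratioChars, natCard_eq_card_ratioChars]
  refine ⟨?_, ?_, ?_⟩ <;> apply Rat.cast_injective (α := ℂ) <;> push_cast <;> assumption
end
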